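/- Let λx, λy, ε be positive reals, Nx, J positive integers, and a, b, c, d real constants. Suppose x : ℝ → ℝ^{Nx} and y : ℝ → ℝ^{Nx × J} are differentiable and satisfy, for all t, x_i'(t) = −(λy/J)·Σ_{j=1}^{J} [ (a + b·x_i(t))·y_{i,j}(t) + (c + d·x_i(t))·y_{i,j}(t)² ] and y_{i,j}'(t) = (λx/ε)·[ (a + c·y_{i,j}(t))·x_i(t) + (b + d·y_{i,j}(t))·x_i(t)² ]. Then the energy E(t) = (λx/(2ε))·Σ_{i=1}^{Nx} x_i(t)² + (λy/(2J))·Σ_{i=1}^{Nx} Σ_{j=1}^{J} y_{i,j}(t)² is constant in t. -/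

import Mathlib

open Finset

theorem hasDerivAt_sum_sq {ι : Type*} (s : Finset ι) {f : ι → ℝ → ℝ} {f' : ι → ℝ} {t : ℝ}
    (hf : ∀ k ∈ s, HasDerivAt (f k) (f' k) t) :
    HasDerivAt (fun u => ∑ k ∈ s, f k u ^ 2) (∑ k ∈ s, 2 * f k t * f' k) t := by
  simpa [mul_assoc] using HasDerivAt.fun_sum fun k hk => (hf k hk).pow 2

/-- The power the coupling draws from a slow variable equals the power it feeds into the
fast one. -/
theorem coupling_power_balance (a b c d x y : ℝ) :
    x * ((a + b * x) * y + (c + d * x) * y ^ 2) = y * ((a + c * y) * x + (b + d * y) * x ^ 2) := by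
  ring

noncomputable def couplingEnergy (lx ly ε : ℝ) {Nx J : ℕ} (x : Fin Nx → ℝ → ℝ)
    (y : Fin Nx → Fin J → ℝ → ℝ) (t : ℝ) : ℝ :=
  (lx / (2 * ε)) * ∑ i, (x i t) ^ 2 + (ly / (2 * J)) * ∑ i, ∑ j, (y i j t) ^ 2

theorem hasDerivAt_couplingEnergy_zero {lx ly ε a b c d : ℝ} {Nx J : ℕ} {x : Fin Nx → ℝ → ℝ}
    {y : Fin Nx → Fin J → ℝ → ℝ} {t : ℝ}
    (hx : ∀ i, HasDerivAt (x i)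
      (-(ly / J) * ∑ j, ((a + b * x i t) * y i j t + (c + d * x i t) * (y i j t) ^ 2)) t)
    (hy : ∀ i j, HasDerivAt (y i j)
      ((lx / ε) * ((a + c * y i j t) * x i t + (b + d * y i j t) * (x i t) ^ 2)) t) :
    HasDerivAt (couplingEnergy lx ly ε x y) 0 t := by
  have hE := ((hasDerivAt_sum_sq univ fun i _ => hx i).const_mul (lx / (2 * ε))).add
    ((HasDerivAt.fun_sum (u := univ) fun i _ => hasDerivAt_sum_sq univ fun j _ => hy i j).const_mul
      (ly / (2 * J)))
  refine hE.congr_deriv ?_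
  simp only [mul_sum, ← sum_add_distrib]
  refine sum_eq_zero fun i _ => sum_eq_zero fun j _ => ?_
  linear_combination (-(lx * ly) / (ε * J)) * coupling_power_balance a b c d (x i t) (y i j t)

theorem coupling_energy_conservation_general
    (lx ly ε : ℝ)
    (Nx J : ℕ)
    (a b c d : ℝ) (x : Fin Nx → ℝ → ℝ) (y : Fin Nx → Fin J → ℝ → ℝ)
    (hx : ∀ i t, HasDerivAt (x i)
      (-(ly / J) * ∑ j, ((a + b * x i t) * y i j t + (c + d * x i t) * (y i j t) ^ 2)) t)
    (hy : ∀ i j t, HasDerivAt (y i j)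
      ((lx / ε) * ((a + c * y i j t) * x i t + (b + d * y i j t) * (x i t) ^ 2)) t) :
    ∀ t s : ℝ,
      (lx / (2 * ε)) * ∑ i, (x i t) ^ 2 + (ly / (2 * J)) * ∑ i, ∑ j, (y i j t) ^ 2
        = (lx / (2 * ε)) * ∑ i, (x i s) ^ 2 + (ly / (2 * J)) * ∑ i, ∑ j, (y i j s) ^ 2 := by
  have hE (t : ℝ) : HasDerivAt (couplingEnergy lx ly ε x y) 0 t :=
    hasDerivAt_couplingEnergy_zero (fun i => hx i t) fun i j => hy i j t
  exact is_const_of_deriv_eq_zero (fun t => (hE t).differentiableAt) fun t => (hE t).deriv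

/-- For the dynamics generated by the coupling terms of the two-scale Lorenz model alone,
the energy `E(t) = (λx/(2ε))·Σᵢ xᵢ(t)² + (λy/(2J))·Σᵢⱼ yᵢⱼ(t)²` is constant in time. -/
theorem coupling_energy_conservation
    (lx ly ε : ℝ) (hlx : 0 < lx) (hly : 0 < ly) (hε : 0 < ε)
    (Nx J : ℕ) (hNx : 0 < Nx) (hJ : 0 < J)
    (a b c d : ℝ) (x : Fin Nx → ℝ → ℝ) (y : Fin Nx → Fin J → ℝ → ℝ)
    (hx : ∀ i t, HasDerivAt (x i)
      (-(ly / J) * ∑ j, ((a + b * x i t) * y i j t + (c + d * x i t) * (y i j t) ^ 2)) t)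
    (hy : ∀ i j t, HasDerivAt (y i j)
      ((lx / ε) * ((a + c * y i j t) * x i t + (b + d * y i j t) * (x i t) ^ 2)) t) :
    ∀ t s : ℝ,
      (lx / (2 * ε)) * ∑ i, (x i t) ^ 2 + (ly / (2 * J)) * ∑ i, ∑ j, (y i j t) ^ 2
        = (lx / (2 * ε)) * ∑ i, (x i s) ^ 2 + (ly / (2 * J)) * ∑ i, ∑ j, (y i j s) ^ 2 :=
  coupling_energy_conservation_general lx ly ε Nx J a b c d x y hx hy
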